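/- Let σ be a signature and let 𝐀 and 𝐁 be σ-structures. There exist doubly stochastic matrices X (rows indexed by B, columns by A) and Y (rows indexed by 𝒞_𝐁, columns by 𝒞_𝐀) such that X M_𝐀^ℓ = M_𝐁^ℓ Y and M_𝐀^ℓ Yᵀ = Xᵀ M_𝐁^ℓ for every label ℓ ∈ L, if and only if 𝐀 and 𝐁 have a common equitable partition. -/

import Mathlib

attribute [local instance] Classical.propDecidable

set_option maxHeartbeats 1000000

noncomputable section

/-- A relational structure over the signature given by symbols `σ` with arities `ar`,
with universe `A`: for each relation symbol, a set of tuples. -/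
structure Struct (σ : Type) (ar : σ → ℕ) (A : Type) : Type where
  rel : ∀ R : σ, Set (Fin (ar R) → A)

variable {σ : Type} {ar : σ → ℕ}

/-- The set of constraints of a structure: pairs `(R, 𝐚)` with `𝐚 ∈ R(AA)`. -/
def Cons {A : Type} (AA : Struct σ ar A) : Type :=
  Σ R : σ, {u : Fin (ar R) → A // u ∈ AA.rel R}

instance Cons.finite {A : Type} [Finite σ] [Finite A] {AA : Struct σ ar A} :
    Finite (Cons AA) :=
  inferInstanceAs (Finite (Σ R : σ, {u : Fin (ar R) → A // u ∈ AA.rel R}))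

noncomputable instance Cons.fintype {A : Type} [Fintype σ] [Fintype A] {AA : Struct σ ar A} :
    Fintype (Cons AA) := Fintype.ofFinite _

/-- Labels `(S, R)` with `R ∈ σ` and `S ⊆ [arity R]`. -/
abbrev Label (σ : Type) (ar : σ → ℕ) : Type := Σ R : σ, Finset (Fin (ar R))

/-- The entry of the matrix representation `M_AA` of a structure at `(a, R(𝐚))`:
the label `(S, R)` with `S = {i : 𝐚[i] = a}`. -/
def lab {A : Type} (AA : Struct σ ar A) (a : A) (c : Cons AA) : Label σ ar :=
  ⟨c.1, Finset.univ.filter fun i => c.2.1 i = a⟩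

/-- The 0/1 matrix `M_AA^ℓ`. -/
def labMat {A : Type} (AA : Struct σ ar A) (ℓ : Label σ ar) : Matrix A (Cons AA) ℝ :=
  fun a c => if lab AA a c = ℓ then 1 else 0

/-- A doubly stochastic matrix: non-negative entries, all rows and all columns sum to 1. -/
def IsDoublyStochastic {α β : Type} [Fintype α] [Fintype β] (X : Matrix α β ℝ) : Prop :=
  (∀ i j, 0 ≤ X i j) ∧ (∀ i, ∑ j, X i j = 1) ∧ (∀ j, ∑ i, X i j = 1)

/-- A left stochastic matrix: non-negative entries, all columns sum to 1. -/
def IsLeftStochastic {α β : Type} [Fintype α] (X : Matrix α β ℝ) : Prop :=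
  (∀ i j, 0 ≤ X i j) ∧ (∀ j, ∑ i, X i j = 1)

/-- Fractional isomorphism: doubly stochastic `X`, `Y` with
`X M_AA^ℓ = M_BB^ℓ Y` and `M_AA^ℓ Yᵀ = Xᵀ M_BB^ℓ` for every label `ℓ`. -/
def FracIso {A B : Type} [Fintype σ] [Fintype A] [Fintype B]
    (AA : Struct σ ar A) (BB : Struct σ ar B) : Prop :=
  ∃ (X : Matrix B A ℝ) (Y : Matrix (Cons BB) (Cons AA) ℝ),
    IsDoublyStochastic X ∧ IsDoublyStochastic Y ∧
    ∀ ℓ : Label σ ar,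
      X * labMat AA ℓ = labMat BB ℓ * Y ∧
      labMat AA ℓ * Y.transpose = X.transpose * labMat BB ℓ

/-- The type of iterated degrees of depth `k`. -/
def DegT (L : Type) : ℕ → Type
  | 0 => Bool
  | k + 1 => Multiset (L × DegT L k)

/-- The iterated degree `δ_k` of an element or a constraint of a structure. -/
def iterDeg {A : Type} [Fintype σ] [Fintype A] (AA : Struct σ ar A) :
    (k : ℕ) → A ⊕ Cons AA → DegT (Label σ ar) k
  | 0, x => x.isLeft
  | k + 1, Sum.inl a =>
      (Finset.univ.val.map fun c : Cons AA => (lab AA a c, iterDeg AA k (Sum.inr c)) :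
        Multiset (Label σ ar × DegT (Label σ ar) k))
  | k + 1, Sum.inr c =>
      (Finset.univ.val.map fun a : A => (lab AA a c, iterDeg AA k (Sum.inl a)) :
        Multiset (Label σ ar × DegT (Label σ ar) k))

/-- Two structures have the same iterated degree sequence. -/
def SameIterDeg {A B : Type} [Fintype σ] [Fintype A] [Fintype B]
    (AA : Struct σ ar A) (BB : Struct σ ar B) : Prop :=
  ∀ k : ℕ,
    Multiset.map (iterDeg AA k) (Finset.univ.val : Multiset (A ⊕ Cons AA)) =
    Multiset.map (iterDeg BB k) (Finset.univ.val : Multiset (B ⊕ Cons BB))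
/-- An equitable partition of a structure, given by index maps `p` (on the universe)
and `q` (on the constraints) together with its parameters `cpar`, `dpar`. -/
def IsEquitable {A : Type} (AA : Struct σ ar A) {I : Type u} {J : Type v}
    (p : A → I) (q : Cons AA → J)
    (cpar : Label σ ar → I → J → ℕ) (dpar : Label σ ar → J → I → ℕ) : Prop :=
  (∀ (a : A) (ℓ : Label σ ar) (j : J),
      Nat.card {c : Cons AA // q c = j ∧ lab AA a c = ℓ} = cpar ℓ (p a) j) ∧
  (∀ (c : Cons AA) (ℓ : Label σ ar) (i : I),
      Nat.card {a : A // p a = i ∧ lab AA a c = ℓ} = dpar ℓ (q c) i)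

/-- Two structures have a common equitable partition: equitable partitions with the same
index sets, the same parameters, and corresponding classes of equal sizes. -/
def CommonEquitable {A B : Type} (AA : Struct σ ar A) (BB : Struct σ ar B) : Prop :=
  ∃ (I J : Type) (pA : A → I) (qA : Cons AA → J) (pB : B → I) (qB : Cons BB → J)
    (cpar : Label σ ar → I → J → ℕ) (dpar : Label σ ar → J → I → ℕ),
    IsEquitable AA pA qA cpar dpar ∧ IsEquitable BB pB qB cpar dpar ∧
    (∀ i : I, Nat.card {a : A // pA a = i} = Nat.card {b : B // pB b = i}) ∧
    (∀ j : J, Nat.card {c : Cons AA // qA c = j} = Nat.card {c : Cons BB // qB c = j})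

/-- `h` is a homomorphism from `AA` to `BB`. -/
def IsHom {A B : Type} (AA : Struct σ ar A) (BB : Struct σ ar B) (h : A → B) : Prop :=
  ∀ (R : σ) (u : Fin (ar R) → A), u ∈ AA.rel R → (fun i => h (u i)) ∈ BB.rel R

/-- The number of homomorphisms from `AA` to `BB`. -/
def homCount {A B : Type} (AA : Struct σ ar A) (BB : Struct σ ar B) : ℕ :=
  Nat.card {h : A → B // IsHom AA BB h}

/-- The number of homomorphisms from `(TT, t)` to `(DD, d)` (with a designated element). -/
def rhomCount {T D : Type} (TT : Struct σ ar T) (t : T) (DD : Struct σ ar D) (d : D) : ℕ :=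
  Nat.card {h : T → D // IsHom TT DD h ∧ h t = d}

/-- The factor graph of a structure: bipartite graph on elements and constraints. -/
def factorGraph {A : Type} (AA : Struct σ ar A) : SimpleGraph (A ⊕ Cons AA) :=
  SimpleGraph.fromRel fun x y =>
    ∃ (a : A) (c : Cons AA), x = Sum.inl a ∧ y = Sum.inr c ∧ ∃ i, c.2.1 i = a

/-- A structure is an ftree if its factor graph is a tree. -/
def IsFtree {A : Type} (AA : Struct σ ar A) : Prop := (factorGraph AA).IsTree
/-- The set `{𝐚}` of elements occurring in the tuple of a constraint, as a Finset. -/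
def tsupp {A : Type} {AA : Struct σ ar A} (c : Cons AA) : Finset A :=
  Finset.univ.image c.2.1

lemma mem_tsupp {A : Type} {AA : Struct σ ar A} (c : Cons AA) (i : Fin (ar c.1)) :
    c.2.1 i ∈ tsupp c :=
  Finset.mem_image_of_mem _ (Finset.mem_univ i)

/-- Feasibility of the system `SA^k(AA, BB)`. -/
def SAfeasible {A B : Type} [Fintype B] (k : ℕ)
    (AA : Struct σ ar A) (BB : Struct σ ar B) : Prop :=
  ∃ (pV : (V : Finset A) → ({x // x ∈ V} → B) → ℝ)
    (pC : (c : Cons AA) → ({x // x ∈ tsupp c} → B) → ℝ),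
    -- all variables take values in [0,1]
    (∀ (V : Finset A) (f : {x // x ∈ V} → B),
        V.Nonempty → V.card ≤ k → 0 ≤ pV V f ∧ pV V f ≤ 1) ∧
    (∀ (c : Cons AA) (f : {x // x ∈ tsupp c} → B), 0 ≤ pC c f ∧ pC c f ≤ 1) ∧
    -- (SA1)
    (∀ V : Finset A, V.Nonempty → V.card ≤ k →
        ∑ f : {x // x ∈ V} → B, pV V f = 1) ∧
    -- (SA2)
    (∀ (U V : Finset A) (hUV : U ⊆ V), U.Nonempty → V.card ≤ k →
        ∀ f : {x // x ∈ U} → B,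
          pV U f = ∑ g : {x // x ∈ V} → B,
            if ∀ u : {x // x ∈ U}, g ⟨u.1, hUV u.2⟩ = f u then pV V g else 0) ∧
    -- (SA3)
    (∀ (c : Cons AA) (U : Finset A) (hU : U ⊆ tsupp c), U.Nonempty → U.card ≤ k →
        ∀ f : {x // x ∈ U} → B,
          pV U f = ∑ g : {x // x ∈ tsupp c} → B,
            if ∀ u : {x // x ∈ U}, g ⟨u.1, hU u.2⟩ = f u then pC c g else 0) ∧
    -- (SA4)
    (∀ (c : Cons AA) (f : {x // x ∈ tsupp c} → B),
        (fun i => f ⟨c.2.1 i, mem_tsupp c i⟩) ∉ BB.rel c.1 → pC c f = 0)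

/-- The relation symbols of the signature `σ*_k`. -/
inductive StarSym (σ : Type) (ar : σ → ℕ) (k : ℕ) : Type
  | TS (j : Fin k) (S : Finset (Fin (j.1 + 1)))
  | TI (j j' : Fin k) (iv : Fin (j'.1 + 1) → Fin (j.1 + 1))
  | RS (R : σ) (S : Finset (Fin (ar R)))
  | RI (R : σ) (j : Fin k) (iv : Fin (j.1 + 1) → Fin (ar R))

/-- Arities for `σ*_k`. -/
def starAr {k : ℕ} : StarSym σ ar k → ℕ
  | .TS _ _ => 1
  | .TI _ _ _ => 2
  | .RS _ _ => 1
  | .RI _ _ _ => 2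

/-- The universe of `AA*_k`: all tuples of length `1 ≤ j ≤ k` together with the constraints. -/
def StarUniv {A : Type} (AA : Struct σ ar A) (k : ℕ) : Type :=
  ((j : Fin k) × (Fin (j.1 + 1) → A)) ⊕ Cons AA

instance StarUniv.finite {A : Type} [Finite σ] [Finite A] {AA : Struct σ ar A} {k : ℕ} :
    Finite (StarUniv AA k) :=
  inferInstanceAs (Finite (((j : Fin k) × (Fin (j.1 + 1) → A)) ⊕ Cons AA))

noncomputable instance StarUniv.fintype {A : Type} [Fintype σ] [Fintype A]
    {AA : Struct σ ar A} {k : ℕ} : Fintype (StarUniv AA k) := Fintype.ofFinite _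

/-- The structure `AA*_k`. -/
def starStruct {A : Type} (AA : Struct σ ar A) (k : ℕ) :
    Struct (StarSym σ ar k) starAr (StarUniv AA k) where
  rel
    | .TS j S => {u | ∃ v : Fin (j.1 + 1) → A,
        (∀ i ∈ S, ∀ i' ∈ S, v i = v i') ∧ u = fun _ => Sum.inl ⟨j, v⟩}
    | .TI j j' iv => {u | ∃ v : Fin (j.1 + 1) → A,
        u = ![Sum.inl ⟨j, v⟩, Sum.inl ⟨j', v ∘ iv⟩]}
    | .RS R S => {u | ∃ (v : Fin (ar R) → A) (hv : v ∈ AA.rel R),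
        (∀ i ∈ S, ∀ i' ∈ S, v i = v i') ∧ u = fun _ => Sum.inr ⟨R, ⟨v, hv⟩⟩}
    | .RI R j iv => {u | ∃ (v : Fin (ar R) → A) (hv : v ∈ AA.rel R),
        u = ![Sum.inr ⟨R, ⟨v, hv⟩⟩, Sum.inl ⟨j, v ∘ iv⟩]}

/-- `AA ≡_k BB` : the structures `AA*_k` and `BB*_k` have a common equitable partition. -/
def EquivK {A B : Type} (k : ℕ) (AA : Struct σ ar A) (BB : Struct σ ar B) : Prop :=
  CommonEquitable (starStruct AA k) (starStruct BB k)

/-- A bundled σ-structure with finite universe. -/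
structure FinStruct (σ : Type) (ar : σ → ℕ) : Type 1 where
  carrier : Type
  [fin : Fintype carrier]
  str : Struct σ ar carrier

/-- One step in a chain: either a homomorphism exists, or the structures are
`≡_1`-equivalent (i.e. have a common equitable partition). -/
def FStep (X Y : FinStruct σ ar) : Prop :=
  (∃ h : X.carrier → Y.carrier, IsHom X.str Y.str h) ∨ CommonEquitable X.str Y.str

/-- The structure `AA` has treewidth `< k`: there is a tree-decomposition all of whose
bags have at most `k` elements. -/
def HasTreewidthLT {A : Type} (AA : Struct σ ar A) (k : ℕ) : Prop :=
  ∃ (V : Type) (G : SimpleGraph V) (β : V → Finset A),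
    G.IsTree ∧
    (∀ c : Cons AA, ∃ v : V, ∀ i, c.2.1 i ∈ β v) ∧
    (∀ (a : A) (u v : V), a ∈ β u → a ∈ β v →
      ∀ p : G.Walk u v, p.IsPath → ∀ w ∈ p.support, a ∈ β w) ∧
    (∀ v : V, (β v).card ≤ k)
/-- The adjacency matrix of a graph (a structure with one binary relation). -/
def adjMat {A : Type} (AA : Struct Unit (fun _ => 2) A) : Matrix A A ℝ :=
  fun a a' => if ![a, a'] ∈ AA.rel () then 1 else 0

/-- A matrix is decomposable if, up to partitioning rows and columns into two
(nontrivial) blocks, it is a direct sum. -/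
def MDecomposable {V W : Type} (M : Matrix V W ℝ) : Prop :=
  ∃ (SV : Set V) (SW : Set W),
    (SV.Nonempty ∨ SW.Nonempty) ∧ (SVᶜ.Nonempty ∨ SWᶜ.Nonempty) ∧
    ∀ v w, (v ∈ SV ∧ w ∉ SW) ∨ (v ∉ SV ∧ w ∈ SW) → M v w = 0

/-- A bundled rooted ftree. -/
structure RootedFtree (σ : Type) (ar : σ → ℕ) : Type 1 where
  carrier : Type
  [fin : Fintype carrier]
  str : Struct σ ar carrier
  isFtree : IsFtree str
  root : carrier

/-- The profile of an element: the number of homomorphisms from each rooted ftree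
mapping the root to it. -/
def degProfile {D : Type} (DD : Struct σ ar D) (d : D) : RootedFtree σ ar → ℕ :=
  fun F => rhomCount F.str F.root DD d

/-- The class of a constraint: its relation symbol, its equality pattern, and the
`degProfile`-classes of its coordinates. -/
def qProfile {D : Type} (DD : Struct σ ar D) (c : Cons DD) :
    Σ R : σ, Set (Fin (ar R) × Fin (ar R)) × (Fin (ar R) → (RootedFtree σ ar → ℕ)) :=
  ⟨c.1, ({p | c.2.1 p.1 = c.2.1 p.2}, fun s => degProfile DD (c.2.1 s))⟩

/-- Number of homomorphisms with a designated element and a designated constraint. -/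
def rhomCount2 {T D : Type} (TT : Struct σ ar T) (t : T) (c : Cons TT)
    (DD : Struct σ ar D) (d : D) (c' : Cons DD) : ℕ :=
  Nat.card {h : T → D // IsHom TT DD h ∧ h t = d ∧
    (⟨c.1, fun i => h (c.2.1 i)⟩ : Σ R : σ, Fin (ar R) → D) = ⟨c'.1, c'.2.1⟩}

/-- `(t, R(𝐭))` can be mapped to `(d, R'(𝐝))`. -/
def CanMap {T D : Type} {TT : Struct σ ar T} {DD : Struct σ ar D}
    (t : T) (c : Cons TT) (d : D) (c' : Cons DD) : Prop :=
  ∃ hR : c.1 = c'.1,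
    (∀ s s' : Fin (ar c.1), c.2.1 s = c.2.1 s' →
        c'.2.1 (Fin.cast (congrArg ar hR) s) = c'.2.1 (Fin.cast (congrArg ar hR) s')) ∧
    (∀ s : Fin (ar c.1), c.2.1 s = t → c'.2.1 (Fin.cast (congrArg ar hR) s) = d)

/-- A substructure of a structure: a subset of the universe together with a subset of
the tuples of each relation, lying inside the subset. -/
structure Substr {A : Type} (AA : Struct σ ar A) : Type where
  carrier : Set A
  srel : ∀ R : σ, Set (Fin (ar R) → A)
  srel_sub : ∀ R : σ, srel R ⊆ AA.rel R
  srel_mem : ∀ R : σ, ∀ u ∈ srel R, ∀ i, u i ∈ carrier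

/-- The substructure as a structure in its own right. -/
def Substr.toStruct {A : Type} {AA : Struct σ ar A} (Q : Substr AA) :
    Struct σ ar {x // x ∈ Q.carrier} where
  rel R := {u | (fun i => (u i).1) ∈ Q.srel R}

/-- Containment of substructures. -/
def Substr.le {A : Type} {AA : Struct σ ar A} (Q Q' : Substr AA) : Prop :=
  Q.carrier ⊆ Q'.carrier ∧ ∀ R : σ, Q.srel R ⊆ Q'.srel R

/-- A subftree of `TT` avoiding the constraint `c`, containing a unique element of the
tuple of `c`, which moreover participates in exactly one constraint of the subftree. -/
def GoodPiece {T : Type} (TT : Struct σ ar T) (c : Cons TT) (Q : Substr TT) : Prop :=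
  IsFtree Q.toStruct ∧
  c.2.1 ∉ Q.srel c.1 ∧
  ∃ x ∈ Q.carrier, (∃ i, c.2.1 i = x) ∧
    (∀ y ∈ Q.carrier, (∃ i, c.2.1 i = y) → y = x) ∧
    (∃! e : Σ R : σ, {u // u ∈ Q.srel R}, ∃ i, e.2.1 i = x)

/-- The collection `TT \ c` of maximal subftrees as above. -/
def TreeMinus {T : Type} (TT : Struct σ ar T) (c : Cons TT) : Set (Substr TT) :=
  {Q | GoodPiece TT c Q ∧ ∀ Q' : Substr TT, GoodPiece TT c Q' → Q.le Q' → Q'.le Q}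

/-- The disjoint union of two structures. -/
def dUnion {A B : Type} (AA : Struct σ ar A) (BB : Struct σ ar B) :
    Struct σ ar (A ⊕ B) where
  rel R := {u | (∃ v ∈ AA.rel R, u = fun i => Sum.inl (v i)) ∨
                (∃ v ∈ BB.rel R, u = fun i => Sum.inr (v i))}

/-- Embedding of constraints of `AA` into constraints of the disjoint union. -/
def consInl {A B : Type} (AA : Struct σ ar A) (BB : Struct σ ar B) (c : Cons AA) :
    Cons (dUnion AA BB) :=
  ⟨c.1, ⟨fun i => Sum.inl (c.2.1 i), Or.inl ⟨c.2.1, c.2.2, rfl⟩⟩⟩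

/-- Embedding of constraints of `BB` into constraints of the disjoint union. -/
def consInr {A B : Type} (AA : Struct σ ar A) (BB : Struct σ ar B) (c : Cons BB) :
    Cons (dUnion AA BB) :=
  ⟨c.1, ⟨fun i => Sum.inr (c.2.1 i), Or.inr ⟨c.2.1, c.2.2, rfl⟩⟩⟩

/-- The stable-degree class of an element of the disjoint union: its full iterated
degree sequence. -/
def degPclass {A B : Type} [Fintype σ] [Fintype A] [Fintype B]
    (AA : Struct σ ar A) (BB : Struct σ ar B) (x : A ⊕ B) :
    (k : ℕ) → DegT (Label σ ar) k :=
  fun k => iterDeg (dUnion AA BB) k (Sum.inl x)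

/-- The stable-degree class of a constraint of the disjoint union. -/
def degQclass {A B : Type} [Fintype σ] [Fintype A] [Fintype B]
    (AA : Struct σ ar A) (BB : Struct σ ar B) (c : Cons (dUnion AA BB)) :
    (k : ℕ) → DegT (Label σ ar) k :=
  fun k => iterDeg (dUnion AA BB) k (Sum.inr c)
/-- The set `Y`: tuples in `(B × [m])^m` with no repeated entries, in which the copy
index of each entry is bounded by the number of occurrences of its `B`-component. -/
def Ytype (B : Type) (m : ℕ) : Type :=
  {y : Fin m → B × Fin m // Function.Injective y ∧
    ∀ i, ((y i).2 : ℕ) + 1 ≤ Nat.card {j : Fin m // (y j).1 = (y i).1}}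

/-- Permuting the coordinates of an element of `Y`. -/
def permY {B : Type} {m : ℕ} (τ : Equiv.Perm (Fin m)) (y : Ytype B m) : Ytype B m :=
  ⟨fun i => y.1 (τ i), y.2.1.comp τ.injective, fun i => by
    have h := y.2.2 (τ i)
    have hc : Nat.card {j : Fin m // (y.1 (τ j)).1 = (y.1 (τ i)).1}
        = Nat.card {j : Fin m // (y.1 j).1 = (y.1 (τ i)).1} :=
      Nat.card_congr (τ.subtypeEquiv fun j => Iff.rfl)
    exact le_trans h (le_of_eq hc.symm)⟩

/-- The structure `X₁` from the proof of Theorem `thm:SA1`, built from a choice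
function `choice` selecting a canonical element of `Y` for each multiset. -/
def X1struct {A B : Type} (AA : Struct σ ar A) (BB : Struct σ ar B) (m : ℕ)
    (choice : (Fin m → B) → Ytype B m) : Struct σ ar (A × Ytype B m) where
  rel R := {u | ∃ a : Fin (ar R) → A, a ∈ AA.rel R ∧
    ∃ tt : Fin m → Fin (ar R) → B,
      (∀ i, tt i ∈ BB.rel R) ∧
      (∀ i s s', a s = a s' → tt i s = tt i s') ∧
      ∃ τ : Equiv.Perm (Fin m),
        u = fun s => (a s, permY τ (choice fun i => tt i s))}

/-!
If `X`, `Y` witness a fractional isomorphism, then `X u = v` and `Xᵀ v = u` force `u a = v b`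
wherever `X b a ≠ 0`, because `X` is doubly stochastic. Applied to the vectors counting the
neighbours of each label and colour, this shows by induction that colour refinement on the
factor graph gives the same colour to any two elements (constraints) linked by a nonzero entry
of `X` (of `Y`). Once the refinement is stable its colour classes form an equitable partition
of each structure with the same parameters, and doubly stochastic matrices preserve the class
sizes. Conversely, averaging over the classes of a common equitable partition gives `X` and `Y`,
and `X M^ℓ = M'^ℓ Y` reduces to the double counting `|P_i| c^ℓ_{ij} = |Q_j| d^ℓ_{ji}`.
Transposing the label matrix swaps elements and constraints, which gives the second half of each
argument from the first.
-/

open Matrix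

section DoublyStochastic

variable {α β γ : Type} [Fintype α] [Fintype β] {X : Matrix β α ℝ}

lemma sum_ite_eq_card_mul (P : α → Prop) [DecidablePred P] (r : ℝ) :
    ∑ a, (if P a then r else 0) = Nat.card {a // P a} * r := by
  rw [← Finset.sum_filter, Finset.sum_const, nsmul_eq_mul, Nat.card_eq_fintype_card,
    Fintype.card_subtype]

def fiberIndicator (φ : α → γ) (d : γ) : α → ℝ := fun a => if φ a = d then 1 else 0

lemma sum_fiberIndicator (φ : α → γ) (d : γ) :
    ∑ a, fiberIndicator φ d a = Nat.card {a // φ a = d} := by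
  simp only [fiberIndicator, sum_ite_eq_card_mul, mul_one]

lemma IsDoublyStochastic.transpose (hX : IsDoublyStochastic X) : IsDoublyStochastic Xᵀ :=
  ⟨fun a b => hX.1 b a, hX.2.2, hX.2.1⟩

lemma IsDoublyStochastic.sum_mulVec (hX : IsDoublyStochastic X) (u : α → ℝ) :
    ∑ b, (X *ᵥ u) b = ∑ a, u a := by
  simp only [mulVec, dotProduct]
  rw [Finset.sum_comm]
  exact Finset.sum_congr rfl fun a _ => by rw [← Finset.sum_mul, hX.2.2 a, one_mul]

lemma IsDoublyStochastic.mulVec_fiberIndicator (hX : IsDoublyStochastic X)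
    {φ : α → γ} {ψ : β → γ} (h : ∀ a b, X b a ≠ 0 → φ a = ψ b) (d : γ) :
    X *ᵥ fiberIndicator φ d = fiberIndicator ψ d := by
  funext b
  have hterm : ∀ a, X b a * fiberIndicator φ d a = X b a * fiberIndicator ψ d b := fun a => by
    by_cases hba : X b a = 0
    · simp [hba]
    · simp [fiberIndicator, h a b hba]
  simp only [mulVec, dotProduct, hterm, ← Finset.sum_mul, hX.2.1 b, one_mul]

lemma IsDoublyStochastic.card_fiber_eq (hX : IsDoublyStochastic X)
    {φ : α → γ} {ψ : β → γ} (h : ∀ a b, X b a ≠ 0 → φ a = ψ b) (d : γ) :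
    Nat.card {a // φ a = d} = Nat.card {b // ψ b = d} := by
  have := hX.sum_mulVec (fiberIndicator φ d)
  rw [hX.mulVec_fiberIndicator h, sum_fiberIndicator, sum_fiberIndicator] at this
  exact_mod_cast this.symm

/-- Since `X` is doubly stochastic, `∑ X b a (u a - v b)²` expands to `‖u‖² - ‖v‖²`, which
vanishes because `‖u‖² = u ⬝ᵥ Xᵀ v = X u ⬝ᵥ v = ‖v‖²`. -/
lemma IsDoublyStochastic.eq_of_mulVec_eq (hX : IsDoublyStochastic X) {u : α → ℝ} {v : β → ℝ}
    (hu : X *ᵥ u = v) (hv : Xᵀ *ᵥ v = u) {a : α} {b : β} (hab : X b a ≠ 0) : u a = v b := by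
  have hnorm : ∑ a, u a ^ 2 = ∑ b, v b ^ 2 := by
    have := dotProduct_mulVec u Xᵀ v
    rw [hv, vecMul_transpose, hu] at this
    simpa only [dotProduct, sq] using this
  have hexpand : ∀ b, ∑ a, X b a * (u a - v b) ^ 2
      = ∑ a, X b a * u a ^ 2 - 2 * v b * (X *ᵥ u) b + v b ^ 2 * ∑ a, X b a := fun b => by
    simp only [mulVec, dotProduct, Finset.mul_sum, ← Finset.sum_sub_distrib,
      ← Finset.sum_add_distrib]
    exact Finset.sum_congr rfl fun a _ => by ring
  have hzero : ∑ b, ∑ a, X b a * (u a - v b) ^ 2 = 0 := by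
    simp only [hexpand, hu, hX.2.1, Finset.sum_add_distrib, Finset.sum_sub_distrib]
    rw [Finset.sum_comm]
    simp only [← Finset.sum_mul, hX.2.2, one_mul, hnorm]
    simp only [mul_assoc, ← sq, ← Finset.mul_sum]
    ring
  have hnonneg : ∀ b a, 0 ≤ X b a * (u a - v b) ^ 2 := fun b a =>
    mul_nonneg (hX.1 b a) (sq_nonneg _)
  have hrow : ∀ b, ∑ a, X b a * (u a - v b) ^ 2 = 0 := congrFun
    ((Fintype.sum_eq_zero_iff_of_nonneg fun b => Finset.sum_nonneg fun a _ => hnonneg b a).1 hzero)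
  have hterm := congrFun ((Fintype.sum_eq_zero_iff_of_nonneg (hnonneg b)).1 (hrow b)) a
  exact sub_eq_zero.1 (pow_eq_zero_iff two_ne_zero |>.1 ((mul_eq_zero.1 hterm).resolve_left hab))

end DoublyStochastic

lemma exists_factorsThrough_succ {S : Type} [Finite S] {T : ℕ → Type} (f : ∀ k, S → T k)
    (hf : ∀ k, (f k).FactorsThrough (f (k + 1))) : ∃ k, (f (k + 1)).FactorsThrough (f k) := by
  have : Finite (Setoid S) := Finite.of_injective (fun s : Setoid S => s.r) fun _ _ hst =>
    Setoid.ext fun a b => Iff.of_eq (congrFun₂ hst a b)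
  let kers : ℕ →o (Setoid S)ᵒᵈ :=
    ⟨fun k => OrderDual.toDual (Setoid.ker (f k)),
      monotone_nat_of_le_succ fun k => Setoid.le_def.2 fun hxy => hf k hxy⟩
  obtain ⟨k, hk⟩ := WellFoundedGT.monotone_chain_condition kers
  exact ⟨k, fun x y hxy => (Setoid.ext_iff.1 (hk (k + 1) k.le_succ) x y).1 hxy⟩

/-- A colour of round `k + 1` records the colour of round `k`, so the partitions only get finer. -/
def RefinedColor (L : Type) : ℕ → Type
  | 0 => Unit
  | k + 1 => RefinedColor L k × Multiset (L × RefinedColor L k)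

/- A structure `AA` enters only through its label matrix `lab AA`, for which `IsFracIsoWitness`,
`IsEquitablePartition` and `HasCommonEquitablePartition` unfold to the definitions of
`FracIso`, `IsEquitable` and `CommonEquitable`. -/
section LabelledMatrix

variable {L V W V' W' : Type}

def IsEquitablePartition (M : Matrix V W L) {I J : Type} (p : V → I) (q : W → J)
    (c : L → I → J → ℕ) (d : L → J → I → ℕ) : Prop :=
  (∀ v ℓ j, Nat.card {w // q w = j ∧ M v w = ℓ} = c ℓ (p v) j) ∧
    (∀ w ℓ i, Nat.card {v // p v = i ∧ M v w = ℓ} = d ℓ (q w) i)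

def HasCommonEquitablePartition (M : Matrix V W L) (M' : Matrix V' W' L) : Prop :=
  ∃ (I J : Type) (p : V → I) (q : W → J) (p' : V' → I) (q' : W' → J)
    (c : L → I → J → ℕ) (d : L → J → I → ℕ),
    IsEquitablePartition M p q c d ∧ IsEquitablePartition M' p' q' c d ∧
    (∀ i, Nat.card {v // p v = i} = Nat.card {v' // p' v' = i}) ∧
    (∀ j, Nat.card {w // q w = j} = Nat.card {w' // q' w' = j})

lemma IsEquitablePartition.transpose {M : Matrix V W L} {I J : Type} {p : V → I} {q : W → J}
    {c : L → I → J → ℕ} {d : L → J → I → ℕ} (h : IsEquitablePartition M p q c d) :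
    IsEquitablePartition Mᵀ q p d c :=
  ⟨h.2, h.1⟩

variable [DecidableEq L]

def labelIndicator (M : Matrix V W L) (ℓ : L) : Matrix V W ℝ :=
  fun v w => if M v w = ℓ then 1 else 0

lemma labelIndicator_transpose (M : Matrix V W L) (ℓ : L) :
    labelIndicator Mᵀ ℓ = (labelIndicator M ℓ)ᵀ :=
  rfl

def refineColor [Fintype W] {C : Type} (M : Matrix V W L) (α : V → C) (β : W → C) (v : V) :
    C × Multiset (L × C) :=
  (α v, Finset.univ.val.map fun w => (M v w, β w))

lemma count_refineColor [Fintype W] {C : Type} [DecidableEq C] (M : Matrix V W L)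
    (α : V → C) (β : W → C) (v : V) (ℓ : L) (j : C) :
    (refineColor M α β v).2.count (ℓ, j) = Nat.card {w // β w = j ∧ M v w = ℓ} := by
  rw [refineColor, Multiset.count_map, Nat.card_eq_fintype_card, Fintype.card_subtype,
    Finset.card_def, Finset.filter_val]
  congr 2
  ext w
  simp [Prod.ext_iff, and_comm, eq_comm]

lemma labelIndicator_mulVec_fiberIndicator [Fintype W] {C : Type} (M : Matrix V W L) (ℓ : L)
    (β : W → C) (j : C) (v : V) :
    (labelIndicator M ℓ *ᵥ fiberIndicator β j) v = Nat.card {w // β w = j ∧ M v w = ℓ} := by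
  rw [← mul_one (Nat.card _ : ℝ), ← sum_ite_eq_card_mul]
  simp only [mulVec, dotProduct, labelIndicator, fiberIndicator, ite_zero_mul_ite_zero, mul_one,
    and_comm]

variable [Fintype V] [Fintype W] [Fintype V'] [Fintype W']

def IsFracIsoWitness (M : Matrix V W L) (M' : Matrix V' W' L)
    (X : Matrix V' V ℝ) (Y : Matrix W' W ℝ) : Prop :=
  IsDoublyStochastic X ∧ IsDoublyStochastic Y ∧
    ∀ ℓ : L, X * labelIndicator M ℓ = labelIndicator M' ℓ * Y ∧
      labelIndicator M ℓ * Yᵀ = Xᵀ * labelIndicator M' ℓ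

lemma IsFracIsoWitness.transpose {M : Matrix V W L} {M' : Matrix V' W' L}
    {X : Matrix V' V ℝ} {Y : Matrix W' W ℝ}
    (h : IsFracIsoWitness M M' X Y) : IsFracIsoWitness Mᵀ M'ᵀ Y X := by
  refine ⟨h.2.1, h.1, fun ℓ => ⟨?_, ?_⟩⟩
  · simpa only [labelIndicator_transpose, transpose_mul, transpose_transpose] using
      congrArg Matrix.transpose (h.2.2 ℓ).2
  · simpa only [labelIndicator_transpose, transpose_mul] using
      congrArg Matrix.transpose (h.2.2 ℓ).1

def colorRefinement (M : Matrix V W L) :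
    (k : ℕ) → (V → RefinedColor L k) × (W → RefinedColor L k)
  | 0 => (fun _ => (), fun _ => ())
  | k + 1 =>
    (refineColor M (colorRefinement M k).1 (colorRefinement M k).2,
      refineColor Mᵀ (colorRefinement M k).2 (colorRefinement M k).1)

lemma IsFracIsoWitness.refineColor_eq {M : Matrix V W L} {M' : Matrix V' W' L}
    {X : Matrix V' V ℝ} {Y : Matrix W' W ℝ} (h : IsFracIsoWitness M M' X Y)
    {C : Type} {α : V → C} {β : W → C} {α' : V' → C} {β' : W' → C}
    (hα : ∀ a b, X b a ≠ 0 → α a = α' b) (hβ : ∀ c c', Y c' c ≠ 0 → β c = β' c')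
    {a : V} {b : V'} (hab : X b a ≠ 0) : refineColor M α β a = refineColor M' α' β' b := by
  refine Prod.ext (hα a b hab) (Multiset.ext.2 fun ⟨ℓ, j⟩ => ?_)
  rw [count_refineColor, count_refineColor]
  have hY := h.2.1.mulVec_fiberIndicator hβ j
  have hYt := h.2.1.transpose.mulVec_fiberIndicator (fun c' c hc => (hβ c c' hc).symm) j
  have hu : X *ᵥ (labelIndicator M ℓ *ᵥ fiberIndicator β j)
      = labelIndicator M' ℓ *ᵥ fiberIndicator β' j := by
    rw [mulVec_mulVec, (h.2.2 ℓ).1, ← mulVec_mulVec, hY]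
  have hv : Xᵀ *ᵥ (labelIndicator M' ℓ *ᵥ fiberIndicator β' j)
      = labelIndicator M ℓ *ᵥ fiberIndicator β j := by
    rw [mulVec_mulVec, ← (h.2.2 ℓ).2, ← mulVec_mulVec, hYt]
  have := h.1.eq_of_mulVec_eq hu hv hab
  rw [labelIndicator_mulVec_fiberIndicator, labelIndicator_mulVec_fiberIndicator] at this
  exact_mod_cast this

lemma IsFracIsoWitness.colorRefinement_eq {M : Matrix V W L} {M' : Matrix V' W' L}
    {X : Matrix V' V ℝ} {Y : Matrix W' W ℝ} (h : IsFracIsoWitness M M' X Y) (k : ℕ) :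
    (∀ a b, X b a ≠ 0 → (colorRefinement M k).1 a = (colorRefinement M' k).1 b) ∧
      (∀ c c', Y c' c ≠ 0 → (colorRefinement M k).2 c = (colorRefinement M' k).2 c') := by
  induction k with
  | zero => exact ⟨fun _ _ _ => rfl, fun _ _ _ => rfl⟩
  | succ k ih =>
    exact ⟨fun _ _ => h.refineColor_eq ih.1 ih.2, fun _ _ => h.transpose.refineColor_eq ih.2 ih.1⟩

lemma isEquitablePartition_of_refineColor {C : Type} (M : Matrix V W L) (α : V → C)
    (β : W → C) (F : C → Multiset (L × C)) (hα : ∀ v, (refineColor M α β v).2 = F (α v))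
    (hβ : ∀ w, (refineColor Mᵀ β α w).2 = F (β w)) :
    IsEquitablePartition M α β (fun ℓ i j => (F i).count (ℓ, j))
      (fun ℓ j i => (F j).count (ℓ, i)) :=
  ⟨fun v ℓ j => (count_refineColor M α β v ℓ j).symm.trans (by rw [hα]),
    fun w ℓ i => (count_refineColor Mᵀ β α w ℓ i).symm.trans (by rw [hβ])⟩

theorem IsFracIsoWitness.hasCommonEquitablePartition {M : Matrix V W L} {M' : Matrix V' W' L}
    {X : Matrix V' V ℝ} {Y : Matrix W' W ℝ} (h : IsFracIsoWitness M M' X Y) :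
    HasCommonEquitablePartition M M' := by
  let f : ∀ k, (V ⊕ W) ⊕ (V' ⊕ W') → RefinedColor L k := fun k =>
    Sum.elim (Sum.elim (colorRefinement M k).1 (colorRefinement M k).2)
      (Sum.elim (colorRefinement M' k).1 (colorRefinement M' k).2)
  have hfst : ∀ k x, (f (k + 1) x).1 = f k x := by
    intro k x
    rcases x with (v | w) | (v | w) <;> rfl
  obtain ⟨k, hk⟩ := exists_factorsThrough_succ f fun k x y hxy => by
    rw [← hfst k x, ← hfst k y, hxy]
  let F := Function.extend (f k) (fun x => (f (k + 1) x).2) fun _ => 0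
  have hsnd : Function.FactorsThrough (fun x => (f (k + 1) x).2) (f k) := fun _ _ hxy =>
    congrArg Prod.snd (hk hxy)
  have hF : ∀ x, (f (k + 1) x).2 = F (f k x) := fun x => (hsnd.extend_apply _ x).symm
  have hcol := h.colorRefinement_eq k
  exact ⟨_, _, _, _, _, _, _, _,
    isEquitablePartition_of_refineColor M _ _ F (fun v => hF (.inl (.inl v)))
      (fun w => hF (.inl (.inr w))),
    isEquitablePartition_of_refineColor M' _ _ F (fun v => hF (.inr (.inl v)))
      (fun w => hF (.inr (.inr w))),
    h.1.card_fiber_eq hcol.1, h.2.1.card_fiber_eq hcol.2⟩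

end LabelledMatrix

section ClassAverage

variable {L V W V' W' I J : Type}

def classAverage (p : V → I) (p' : V' → I) : Matrix V' V ℝ :=
  fun b a => if p a = p' b then (Nat.card {a // p a = p' b} : ℝ)⁻¹ else 0

lemma card_fiber_ne_zero [Finite V] (p : V → I) (v : V) :
    (Nat.card {v' // p v' = p v} : ℝ) ≠ 0 :=
  Nat.cast_ne_zero.2 (@Nat.card_pos _ ⟨⟨v, rfl⟩⟩ _).ne'

lemma classAverage_apply' (p : V → I) (p' : V' → I) (b : V') (a : V) :
    classAverage p p' b a = if p' b = p a then (Nat.card {a' // p a' = p a} : ℝ)⁻¹ else 0 := by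
  unfold classAverage
  by_cases hb : p' b = p a
  · rw [if_pos hb.symm, if_pos hb, hb]
  · rw [if_neg (Ne.symm hb), if_neg hb]

variable [Fintype V] [Fintype W] [Fintype V'] [Fintype W']

lemma isDoublyStochastic_classAverage {p : V → I} {p' : V' → I}
    (hp : ∀ i, Nat.card {v // p v = i} = Nat.card {v' // p' v' = i}) :
    IsDoublyStochastic (classAverage p p') := by
  refine ⟨fun b a => ?_, fun b => ?_, fun a => ?_⟩
  · unfold classAverage
    split_ifs <;> positivity
  · simp only [classAverage]
    rw [sum_ite_eq_card_mul, hp, mul_inv_cancel₀ (card_fiber_ne_zero p' b)]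
  · simp only [classAverage_apply']
    rw [sum_ite_eq_card_mul, ← hp, mul_inv_cancel₀ (card_fiber_ne_zero p a)]

lemma IsEquitablePartition.card_mul_eq {M : Matrix V W L} {p : V → I} {q : W → J}
    {c : L → I → J → ℕ} {d : L → J → I → ℕ} (h : IsEquitablePartition M p q c d)
    (ℓ : L) (i : I) (j : J) :
    Nat.card {v // p v = i} * c ℓ i j = Nat.card {w // q w = j} * d ℓ j i := by
  classical
  set s := Finset.univ.filter (p · = i)
  set t := Finset.univ.filter (q · = j)
  have hs : ∀ v ∈ s, (t.bipartiteAbove (fun v w => M v w = ℓ) v).card = c ℓ i j := by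
    intro v hv
    rw [← (Finset.mem_filter.1 hv).2, ← h.1 v ℓ j, Nat.card_eq_fintype_card,
      Fintype.card_subtype, Finset.bipartiteAbove, Finset.filter_filter]
  have ht : ∀ w ∈ t, (s.bipartiteBelow (fun v w => M v w = ℓ) w).card = d ℓ j i := by
    intro w hw
    rw [← (Finset.mem_filter.1 hw).2, ← h.2 w ℓ i, Nat.card_eq_fintype_card,
      Fintype.card_subtype, Finset.bipartiteBelow, Finset.filter_filter]
  have hcount := Finset.sum_card_bipartiteAbove_eq_sum_card_bipartiteBelow
    (fun v w => M v w = ℓ) (s := s) (t := t)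
  rw [Finset.sum_congr rfl hs, Finset.sum_congr rfl ht, Finset.sum_const, Finset.sum_const,
    smul_eq_mul, smul_eq_mul] at hcount
  simpa only [Nat.card_eq_fintype_card, Fintype.card_subtype] using hcount

variable [DecidableEq L]

lemma classAverage_mul_labelIndicator {M : Matrix V W L} {M' : Matrix V' W' L}
    {p : V → I} {q : W → J} {p' : V' → I} {q' : W' → J}
    {c : L → I → J → ℕ} {d : L → J → I → ℕ}
    (hM : IsEquitablePartition M p q c d) (hM' : IsEquitablePartition M' p' q' c d)
    (hp : ∀ i, Nat.card {v // p v = i} = Nat.card {v' // p' v' = i}) (ℓ : L) :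
    classAverage p p' * labelIndicator M ℓ = labelIndicator M' ℓ * classAverage q q' := by
  ext b w
  simp only [mul_apply, labelIndicator]
  conv_lhs => simp only [classAverage, ite_zero_mul_ite_zero, mul_one]
  conv_rhs => simp only [classAverage_apply', ite_zero_mul_ite_zero, one_mul]
  simp only [sum_ite_eq_card_mul]
  have hn : (Nat.card {a // p a = p' b} : ℝ) ≠ 0 := by
    rw [hp]
    exact card_fiber_ne_zero p' b
  rw [hM.2 w ℓ (p' b), Nat.card_congr (Equiv.subtypeEquivRight fun _ => and_comm),
    hM'.1 b ℓ (q w), ← div_eq_mul_inv, ← div_eq_mul_inv,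
    div_eq_div_iff hn (card_fiber_ne_zero q w)]
  rw [mul_comm, mul_comm (c ℓ (p' b) (q w) : ℝ)]
  exact_mod_cast (hM.card_mul_eq ℓ (p' b) (q w)).symm

theorem HasCommonEquitablePartition.exists_isFracIsoWitness {M : Matrix V W L}
    {M' : Matrix V' W' L} (h : HasCommonEquitablePartition M M') :
    ∃ X Y, IsFracIsoWitness M M' X Y := by
  obtain ⟨I, J, p, q, p', q', c, d, hM, hM', hp, hq⟩ := h
  refine ⟨classAverage p p', classAverage q q', isDoublyStochastic_classAverage hp,
    isDoublyStochastic_classAverage hq,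
    fun ℓ => ⟨classAverage_mul_labelIndicator hM hM' hp ℓ, ?_⟩⟩
  simpa only [labelIndicator_transpose, transpose_mul, transpose_transpose] using
    congrArg Matrix.transpose (classAverage_mul_labelIndicator hM.transpose hM'.transpose hq ℓ)

theorem exists_isFracIsoWitness_iff {M : Matrix V W L} {M' : Matrix V' W' L} :
    (∃ X Y, IsFracIsoWitness M M' X Y) ↔ HasCommonEquitablePartition M M' :=
  ⟨fun ⟨_, _, h⟩ => h.hasCommonEquitablePartition, fun h => h.exists_isFracIsoWitness⟩

end ClassAverage

theorem stmt1 [Fintype σ] {A B : Type} [Fintype A] [Fintype B]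
    (AA : Struct σ ar A) (BB : Struct σ ar B) :
    FracIso AA BB ↔ CommonEquitable AA BB :=
  exists_isFracIsoWitness_iff

end
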